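/- Fix s ∈ ℂ and define P : ℂ⁶ × ℂ⁶ → (exterior algebra of ℂ⁶) by P(t,u) := (α + t₁₁ᾱ + t₁₂β̄)∧(γ + t₃₁ᾱ + t₃₂β̄ − D(t)γ̄)∧(ᾱ + u₁₁α + u₁₂β) − s·(α + t₁₁ᾱ + t₁₂β̄)∧(β + t₂₁ᾱ + t₂₂β̄)∧(γ̄ + u₃₁α + u₃₂β − D(u)γ), where D(t) := t₁₁t₂₂ − t₁₂t₂₁ and u = (u₁₁,u₁₂,u₂₁,u₂₂,u₃₁,u₃₂) plays the role of the conjugate parameter t̄. Then for each fixed t, the map u ↦ P(t,u) is ℂ-differentiable, and its derivative at (t,u) = (0,0) in the direction w ∈ ℂ⁶ equals −w₁₂·(α∧β∧γ). (This is the computation showing that the only nonvanishing anti-holomorphic first-order derivative at t = 0 of the harmonic representative Γ₁(t) of the bundle H^{2,1}_[γ] is ∂Γ₁/∂t̄₁₂(0) = −α∧β∧γ, which lies in H^{3,0}; it is the key step in proving that F²ℋ³_[γ] is a holomorphic subbundle, Theorem 4.8(ii).) -/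
import Mathlib
set_option maxHeartbeats 1000000


noncomputable section

/-- The exterior algebra of `ℂ⁶` in which all cohomology computations on the Iwasawa
manifold are carried out. -/
abbrev Λ6 : Type := ExteriorAlgebra ℂ (Fin 6 → ℂ)

/-- The degree-one generator corresponding to the `i`-th basis vector of `ℂ⁶`. -/
def gen (i : Fin 6) : Λ6 := ExteriorAlgebra.ι ℂ (Pi.single i (1 : ℂ))

/-- `α` -/ def α : Λ6 := gen 0
/-- `β` -/ def β : Λ6 := gen 1
/-- `γ` -/ def γ : Λ6 := gen 2
/-- `ᾱ` -/ def α' : Λ6 := gen 3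
/-- `β̄` -/ def β' : Λ6 := gen 4
/-- `γ̄` -/ def γ' : Λ6 := gen 5

-- indexing convention for parameters: t 0 = t₁₁, t 1 = t₁₂, t 2 = t₂₁, t 3 = t₂₂,
-- t 4 = t₃₁, t 5 = t₃₂ (and the same for u, which plays the role of t̄).

/-- `D(t) = t₁₁t₂₂ − t₁₂t₂₁` -/
def Dd (t : Fin 6 → ℂ) : ℂ := t 0 * t 3 - t 1 * t 2

/-- The harmonic representative `Γ₁(t) = α_t∧γ_t∧ᾱ_t − s·α_t∧β_t∧γ̄_t` with the conjugated
parameters treated as the independent variables `u` and `s` standing for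
`σ_{2 2̄}(t)/σ̄₁₂(t)`. -/
def P (s : ℂ) (t u : Fin 6 → ℂ) : Λ6 :=
  (α + t 0 • α' + t 1 • β') * (γ + t 4 • α' + t 5 • β' - Dd t • γ') *
      (α' + u 0 • α + u 1 • β)
    - s • ((α + t 0 • α' + t 1 • β') * (β + t 2 • α' + t 3 • β') *
      (γ' + u 4 • α + u 5 • β - Dd u • γ))

lemma gen_sq (i : Fin 6) : gen i * gen i = 0 := ExteriorAlgebra.ι_sq_zero _

lemma gen_swap (i j : Fin 6) : gen i * gen j = -(gen j * gen i) :=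
  eq_neg_of_add_eq_zero_left (ExteriorAlgebra.ι_add_mul_swap _ _)

lemma gen_aba (i j : Fin 6) : gen i * gen j * gen i = 0 := by
  rw [mul_assoc, gen_swap j i, mul_neg, ← mul_assoc, gen_sq, zero_mul, neg_zero]

lemma gen_abb (i j : Fin 6) : gen i * gen j * gen j = 0 := by
  rw [mul_assoc, gen_sq, mul_zero]

lemma acb_eq : α * γ * β = -(α * β * γ) := by
  unfold α β γ
  rw [mul_assoc, gen_swap 2 1, mul_neg, ← mul_assoc]

/-- `f (P s t u)` as an explicit polynomial in the coordinates of `u`. -/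
lemma fP_expand (s : ℂ) (t u : Fin 6 → ℂ) (f : Λ6 →ₗ[ℂ] ℂ) :
    f (P s t u) =
      f ((α + t 0 • α' + t 1 • β') * (γ + t 4 • α' + t 5 • β' - Dd t • γ') * α')
      + u 0 * f ((α + t 0 • α' + t 1 • β') * (γ + t 4 • α' + t 5 • β' - Dd t • γ') * α)
      + u 1 * f ((α + t 0 • α' + t 1 • β') * (γ + t 4 • α' + t 5 • β' - Dd t • γ') * β)
      - s * (f ((α + t 0 • α' + t 1 • β') * (β + t 2 • α' + t 3 • β') * γ')
          + u 4 * f ((α + t 0 • α' + t 1 • β') * (β + t 2 • α' + t 3 • β') * α)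
          + u 5 * f ((α + t 0 • α' + t 1 • β') * (β + t 2 • α' + t 3 • β') * β)
          - (u 0 * u 3 - u 1 * u 2) *
              f ((α + t 0 • α' + t 1 • β') * (β + t 2 • α' + t 3 • β') * γ)) := by
  unfold P Dd
  simp only [mul_add, mul_sub, mul_smul_comm, map_add, map_sub, map_smul, smul_eq_mul]

/-- For each fixed `t`, the map `u ↦ P(t,u)` is ℂ-differentiable, and its derivative at
`(t,u) = (0,0)` in the direction `w` equals `−w₁₂·(α∧β∧γ)`. Since the exterior algebra
`Λ6` is a finite-dimensional complex vector space (which carries no distinguished norm in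
Mathlib), differentiability and the value of the derivative are expressed, equivalently,
after composing with an arbitrary ℂ-linear functional `f : Λ6 →ₗ[ℂ] ℂ`. -/
theorem antiholomorphic_derivative_of_Gamma1 (s : ℂ) :
    (∀ (t : Fin 6 → ℂ) (f : Λ6 →ₗ[ℂ] ℂ), Differentiable ℂ (fun u => f (P s t u))) ∧
    (∀ (w : Fin 6 → ℂ) (f : Λ6 →ₗ[ℂ] ℂ),
      fderiv ℂ (fun u => f (P s 0 u)) 0 w = f ((-(w 1)) • (α * β * γ))) := by
  constructor
  · intro t f
    have : (fun u => f (P s t u)) = fun u : Fin 6 → ℂ =>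
        f ((α + t 0 • α' + t 1 • β') * (γ + t 4 • α' + t 5 • β' - Dd t • γ') * α')
        + u 0 * f ((α + t 0 • α' + t 1 • β') * (γ + t 4 • α' + t 5 • β' - Dd t • γ') * α)
        + u 1 * f ((α + t 0 • α' + t 1 • β') * (γ + t 4 • α' + t 5 • β' - Dd t • γ') * β)
        - s * (f ((α + t 0 • α' + t 1 • β') * (β + t 2 • α' + t 3 • β') * γ')
            + u 4 * f ((α + t 0 • α' + t 1 • β') * (β + t 2 • α' + t 3 • β') * α)
            + u 5 * f ((α + t 0 • α' + t 1 • β') * (β + t 2 • α' + t 3 • β') * β)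
            - (u 0 * u 3 - u 1 * u 2) *
                f ((α + t 0 • α' + t 1 • β') * (β + t 2 • α' + t 3 • β') * γ)) := by
      funext u; exact fP_expand s t u f
    rw [this]
    fun_prop
  · intro w f
    set D : ℂ := f (α * β * γ) with hD
    have aca : α * γ * α = 0 := by unfold α γ; exact gen_aba 0 2
    have aba : α * β * α = 0 := by unfold α β; exact gen_aba 0 1
    have abb : α * β * β = 0 := by unfold α β; exact gen_abb 0 1
    have hsimp : (fun u => f (P s 0 u)) = fun u : Fin 6 → ℂ =>
        f (α * γ * α') - u 1 * D
          - s * (f (α * β * γ') - (u 0 * u 3 - u 1 * u 2) * D) := by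
      funext u
      rw [fP_expand]
      simp only [Pi.zero_apply, zero_smul, add_zero, Dd, mul_zero, zero_mul, sub_zero,
        aca, aba, abb, acb_eq, map_zero, map_neg, ← hD]
      ring
    rw [hsimp]
    have h0 : HasFDerivAt (fun u : Fin 6 → ℂ => u 0)
        ((ContinuousLinearMap.proj 0 : (Fin 6 → ℂ) →L[ℂ] ℂ)) (0 : Fin 6 → ℂ) :=
      by apply hasFDerivAt_apply
    have h1 : HasFDerivAt (fun u : Fin 6 → ℂ => u 1)
        ((ContinuousLinearMap.proj 1 : (Fin 6 → ℂ) →L[ℂ] ℂ)) (0 : Fin 6 → ℂ) :=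
      by apply hasFDerivAt_apply
    have h2 : HasFDerivAt (fun u : Fin 6 → ℂ => u 2)
        ((ContinuousLinearMap.proj 2 : (Fin 6 → ℂ) →L[ℂ] ℂ)) (0 : Fin 6 → ℂ) :=
      by apply hasFDerivAt_apply
    have h3 : HasFDerivAt (fun u : Fin 6 → ℂ => u 3)
        ((ContinuousLinearMap.proj 3 : (Fin 6 → ℂ) →L[ℂ] ℂ)) (0 : Fin 6 → ℂ) :=
      by apply hasFDerivAt_apply
    have hg : HasFDerivAt (fun u : Fin 6 → ℂ =>
        f (α * γ * α') - u 1 * D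
          - s * (f (α * β * γ') - (u 0 * u 3 - u 1 * u 2) * D)) _ (0 : Fin 6 → ℂ) :=
      ((hasFDerivAt_const (f (α * γ * α')) _).sub (h1.mul_const D)).sub
        (((hasFDerivAt_const (f (α * β * γ')) _).sub
          (((h0.mul h3).sub (h1.mul h2)).mul_const D)).const_mul s)
    rw [hg.fderiv]
    simp [map_smul, smul_eq_mul, hD]
    ring
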